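/- arXiv:1208.0501 — 7 statements merged into one kernel-verified Lean document; each statement's English description precedes it below -/
import Mathlib

section
/- Let M be a triangle-free graph on r vertices such that its complement M^c contains K_{n-1} as a subgraph, and let s be an integer with 1 ≤ s < n and (r-n)(s+1) > (n-1)(n-2). Then M^c contains K_n - K_{1,s} (the complete graph on n vertices minus the edges of a star with s leaves). -/
open SimpleGraph

/-- `H` is contained in `G` as a (not necessarily induced) subgraph. -/
def Contains {α β : Type*} (H : SimpleGraph α) (G : SimpleGraph β) : Prop :=
  ∃ f : α → β, Function.Injective f ∧ ∀ ⦃a b⦄, H.Adj a b → G.Adj (f a) (f b)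

/-- The complete graph `K_n` minus the edges of a star `K_{1,s}`
(center `0`, leaves `1,…,s`). -/
def KnMinusStar (n s : ℕ) : SimpleGraph (Fin n) :=
  (SimpleGraph.fromRel (fun a b : Fin n => a.val = 0 ∧ 1 ≤ b.val ∧ b.val ≤ s))ᶜ

/-!
Write `n = m + 1`. If `Mᶜ` has no copy of `K_{m+1} - K_{1,s}`, then every vertex outside an
independent `m`-set `S` of `M` has more than `s` neighbours in `S`: otherwise list `S` with those
neighbours first and put the vertex in front. In a triangle-free graph neighbourhoods are
independent, so this caps every degree at `m`. Double counting the edges between the given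
independent `m`-set and its complement then produces a vertex `c` of degree `m`. Double counting
again between `B = N(c)` and the `r - m - 1` vertices outside `B ∪ {c}`, where each vertex of `B`
has at most `m - 1` such neighbours because `c` is one of its neighbours, gives
`(r - m - 1)(s + 1) ≤ m (m - 1)`, contradicting the hypothesis.
-/

open Finset

lemma Finset.exists_enumeration_filter_first {α : Type*} (S : Finset α) (p : α → Prop)
    [DecidablePred p] :
    ∃ g : Fin #S → α, Function.Injective g ∧ (∀ i, g i ∈ S) ∧
      ∀ i, p (g i) → (i : ℕ) < #{x ∈ S | p x} := by
  set l := {x ∈ S | p x}.toList ++ {x ∈ S | ¬p x}.toList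
  have hlen : l.length = #S := by
    simp [l, card_filter_add_card_filter_not]
  have hnodup : l.Nodup :=
    (nodup_toList _).append (nodup_toList _) fun x hx hx' => by simp_all
  refine ⟨fun i => l[i.1], fun i j hij => Fin.ext ?_, fun i => ?_, fun i hi => ?_⟩
  · exact (hnodup.getElem_inj_iff).1 hij
  · have := List.getElem_mem (l := l) (n := i.1) (by omega)
    simp only [l, List.mem_append, mem_toList, mem_filter] at this
    tauto
  · by_contra! hge
    have : l[i.1] ∈ {x ∈ S | ¬p x}.toList := by
      simp only [l]
      rw [List.getElem_append_right (by simpa using hge)]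
      exact List.getElem_mem _
    simp_all

lemma contains_knMinusStar_succ {V : Type*} (G : SimpleGraph V) {m s : ℕ} (v : V)
    (g : Fin m → V) (hv : v ∉ Set.range g) (hclique : Pairwise fun i j => G.Adj (g i) (g j))
    (hstar : ∀ i : Fin m, s ≤ i → G.Adj v (g i)) :
    Contains (KnMinusStar (m + 1) s) G := by
  have hg : Function.Injective g := fun i j hij => by
    by_contra hne
    exact G.ne_of_adj (hclique hne) hij
  refine ⟨Fin.cons v g, Fin.cons_injective_of_injective hv hg, fun a b hab => ?_⟩
  simp only [KnMinusStar, compl_adj, fromRel_adj, ne_eq, not_and, not_or] at hab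
  cases a using Fin.cases <;> cases b using Fin.cases
  · exact absurd rfl hab.1
  · simpa using hstar _ (by simpa using hab.2 (Fin.succ_ne_zero _).symm)
  · simpa using (hstar _ (by simpa using hab.2 (Fin.succ_ne_zero _))).symm
  · simpa using hclique (by simpa using hab.1)

lemma contains_knMinusStar_of_isNIndepSet {V : Type*} (M : SimpleGraph V) [DecidableRel M.Adj]
    {m s : ℕ} {S : Finset V} (hS : M.IsNIndepSet m S) {v : V} (hv : v ∉ S)
    (hfew : #{x ∈ S | M.Adj v x} ≤ s) :
    Contains (KnMinusStar (m + 1) s) Mᶜ := by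
  obtain ⟨hind, rfl⟩ := hS
  obtain ⟨g, hg, hgS, hfirst⟩ := S.exists_enumeration_filter_first (M.Adj v)
  refine contains_knMinusStar_succ Mᶜ v g ?_ (fun i j hij => ?_) fun i hi => ?_
  · rintro ⟨i, rfl⟩
    exact hv (hgS i)
  · exact (compl_adj _ _ _).2 ⟨hg.ne hij, hind (hgS i) (hgS j) (hg.ne hij)⟩
  · refine (compl_adj _ _ _).2 ⟨fun h => hv (h ▸ hgS i), fun hadj => ?_⟩
    have := hfirst i hadj
    omega

lemma SimpleGraph.card_filter_adj_le_degree {V : Type*} (M : SimpleGraph V)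
    [DecidableRel M.Adj] (W : Finset V) (x : V) [Fintype (M.neighborSet x)] :
    #{w ∈ W | M.Adj x w} ≤ M.degree x := by
  rw [← card_neighborFinset_eq_degree]
  exact card_le_card fun w hw => by simp_all

section OutsideNeighborsExceed

variable {V : Type*} {M : SimpleGraph V} [DecidableRel M.Adj] {m s : ℕ}

variable (M m s) in
def OutsideNeighborsExceed : Prop :=
  ∀ S, M.IsNIndepSet m S → ∀ v ∉ S, s < #{x ∈ S | M.Adj v x}

lemma OutsideNeighborsExceed.degree_le [Fintype V] (h : OutsideNeighborsExceed M m s)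
    (htf : M.CliqueFree 3) (x : V) : M.degree x ≤ m := by
  by_contra! hx
  rw [← card_neighborFinset_eq_degree] at hx
  obtain ⟨S, hSN, hS⟩ := exists_subset_card_eq hx.le
  obtain ⟨w, hwN, hwS⟩ := exists_mem_notMem_of_card_lt_card (hS ▸ hx)
  have hind : M.IsIndepSet (M.neighborFinset x : Set V) := by
    simpa using isIndepSet_neighborSet_of_triangleFree M htf x
  have hnone : #{y ∈ S | M.Adj w y} = 0 :=
    card_eq_zero.2 <| filter_eq_empty_iff.2 fun y hy hwy => hind hwN (hSN hy) hwy.ne hwy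
  have := h S ⟨hind.mono fun y hy => by simpa using hSN hy, hS⟩ w hwS
  omega

lemma OutsideNeighborsExceed.card_mul_le (h : OutsideNeighborsExceed M m s) {S W : Finset V}
    (hS : M.IsNIndepSet m S) (hWS : Disjoint W S) {k : ℕ}
    (hk : ∀ x ∈ S, #{w ∈ W | M.Adj x w} ≤ k) : #W * (s + 1) ≤ m * k := by
  rw [← hS.card_eq]
  refine card_mul_le_card_mul M.Adj (fun w hw => h S hS w (disjoint_left.1 hWS hw))
    fun x hx => ?_
  simpa only [bipartiteBelow, M.adj_comm _ x] using hk x hx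

lemma OutsideNeighborsExceed.exists_le_degree [Fintype V] [DecidableEq V]
    (h : OutsideNeighborsExceed M m s) {A : Finset V}
    (hA : M.IsNIndepSet m A) (hcard : m * (m - 1) < (Fintype.card V - (m + 1)) * (s + 1)) :
    ∃ c, m ≤ M.degree c := by
  by_contra! hlow
  have key := h.card_mul_le hA disjoint_compl_left (k := m - 1) fun x _ =>
    (M.card_filter_adj_le_degree _ x).trans (Nat.le_sub_one_of_lt (hlow x))
  rw [card_compl, hA.card_eq] at key
  have : (Fintype.card V - (m + 1)) * (s + 1) ≤ (Fintype.card V - m) * (s + 1) :=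
    Nat.mul_le_mul_right _ (by omega)
  omega

lemma OutsideNeighborsExceed.false [Fintype V] [DecidableEq V]
    (h : OutsideNeighborsExceed M m s) (htf : M.CliqueFree 3) {A : Finset V}
    (hA : M.IsNIndepSet m A)
    (hcard : m * (m - 1) < (Fintype.card V - (m + 1)) * (s + 1)) : False := by
  obtain ⟨c, hc⟩ := h.exists_le_degree hA hcard
  obtain ⟨B, hBN, hB⟩ := exists_subset_card_eq (s := M.neighborFinset c) hc
  have hBind : M.IsNIndepSet m B :=
    ⟨(isIndepSet_neighborSet_of_triangleFree M htf c).mono fun y hy => by simpa using hBN hy,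
      hB⟩
  have hcB : c ∉ B := fun hcB => M.irrefl ((mem_neighborFinset _ _ _).1 (hBN hcB))
  have key := h.card_mul_le hBind (W := (insert c B)ᶜ)
    (disjoint_compl_left.mono_right (subset_insert c B)) (k := m - 1) fun x hx => by
      have hxc : c ∈ M.neighborFinset x := by simpa [M.adj_comm x] using hBN hx
      have hsub : {w ∈ (insert c B)ᶜ | M.Adj x w} ⊆ (M.neighborFinset x).erase c :=
        fun w hw => by simp_all
      have := card_le_card hsub
      rw [card_erase_of_mem hxc, card_neighborFinset_eq_degree] at this
      have := h.degree_le htf x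
      omega
  rw [card_compl, card_insert_of_notMem hcB, hB] at key
  omega

end OutsideNeighborsExceed

theorem contains_knMinusStar_of_cliqueFree_three {V : Type*} [Fintype V] {M : SimpleGraph V}
    (htf : M.CliqueFree 3) {m s : ℕ} {A : Finset V} (hA : M.IsNIndepSet m A)
    (hcard : m * (m - 1) < (Fintype.card V - (m + 1)) * (s + 1)) :
    Contains (KnMinusStar (m + 1) s) Mᶜ := by
  classical
  by_contra hM
  refine OutsideNeighborsExceed.false (fun S hS v hv => ?_) htf hA hcard
  by_contra! hfew
  exact hM (contains_knMinusStar_of_isNIndepSet M hS hv hfew)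

lemma Contains.exists_isNClique {V : Type*} {G : SimpleGraph V} {k : ℕ}
    (h : Contains (⊤ : SimpleGraph (Fin k)) G) : ∃ S : Finset V, G.IsNClique k S := by
  classical
  obtain ⟨g, hg, hadj⟩ := h
  refine ⟨univ.map ⟨g, hg⟩, ⟨?_, by simp⟩⟩
  rintro _ hx _ hy hxy
  obtain ⟨i, -, rfl⟩ := mem_map.1 hx
  obtain ⟨j, -, rfl⟩ := mem_map.1 hy
  exact hadj ((top_adj _ _).2 fun hij => hxy (by rw [hij]))

theorem stmt0_general {V : Type*} [Fintype V] (M : SimpleGraph V) (r n s : ℕ)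
    (hr : Fintype.card V = r)
    (htf : M.CliqueFree 3)
    (hK : Contains (⊤ : SimpleGraph (Fin (n - 1))) Mᶜ)
    (hineq : ((r : ℤ) - n) * (s + 1) > ((n : ℤ) - 1) * ((n : ℤ) - 2)) :
    Contains (KnMinusStar n s) Mᶜ := by
  obtain _ | m := n
  · exact ⟨Fin.elim0, fun i => i.elim0, fun i => i.elim0⟩
  obtain ⟨A, hA⟩ := hK.exists_isNClique
  refine contains_knMinusStar_of_cliqueFree_three htf
    ((isNClique_compl M).1 (by simpa using hA)) ?_
  have hm : ((m * (m - 1) : ℕ) : ℤ) = m * (m - 1) := by cases m <;> simp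
  push_cast at hineq
  have hmr : m + 1 ≤ r := by
    by_contra! hrm
    have : (r : ℤ) < m + 1 := by exact_mod_cast hrm
    nlinarith [hm ▸ Nat.cast_nonneg (α := ℤ) (m * (m - 1))]
  rw [← Nat.cast_lt (α := ℤ), hm, Nat.cast_mul, Nat.cast_sub (hr ▸ hmr), hr]
  push_cast
  linarith

theorem stmt0 {V : Type*} [Fintype V] (M : SimpleGraph V) (r n s : ℕ)
    (hr : Fintype.card V = r)
    (htf : M.CliqueFree 3)
    (hK : Contains (⊤ : SimpleGraph (Fin (n - 1))) Mᶜ)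
    (hs1 : 1 ≤ s) (hsn : s < n)
    (hineq : ((r : ℤ) - n) * (s + 1) > ((n : ℤ) - 1) * ((n : ℤ) - 2)) :
    Contains (KnMinusStar n s) Mᶜ :=
  stmt0_general M r n s hr htf hK hineq
end

section
/- Let n be an integer and M a triangle-free graph on at least 3n+4 vertices whose complement contains K_n. Then M^c contains K_{n+2} - D_{m,m}, where m = ⌊(n-1)/2⌋. -/
open SimpleGraph

/-- `K_k` minus the edges of the double star `D_{m,m}`: centers `0` and `1` are
adjacent, `0` has the extra leaves `2,…,m+1` and `1` has the extra leaves
`m+2,…,2m+1`. -/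
def KnMinusDoubleStar (k m : ℕ) : SimpleGraph (Fin k) :=
  (SimpleGraph.fromRel (fun a b : Fin k =>
    (a.val = 0 ∧ b.val = 1) ∨
    (a.val = 0 ∧ 2 ≤ b.val ∧ b.val ≤ m + 1) ∨
    (a.val = 1 ∧ m + 2 ≤ b.val ∧ b.val ≤ 2 * m + 1)))ᶜ

/-!
Write `m = ⌊(n - 1) / 2⌋`. If `W` is an independent `n`-set of `M` and `x ≠ y` are vertices
outside `W` whose neighbourhoods in `W` are disjoint and have at most `m` elements, then `x`, `y`
and `W` carry a copy of `K_{n+2} - D_{m,m}` in `Mᶜ`: `x` and `y` are the centres, and the leaves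
of `x` (of `y`) are `m` vertices of `W` containing its neighbours.

If `α(M) ≥ n + 2` such a configuration sits inside a larger independent set. Otherwise, suppose
that of any two vertices outside `W` with disjoint neighbourhoods in `W`, one sees more than `m`
vertices of `W`. Since `2 (m + 1) ≥ n` and `M` is triangle-free, two adjacent such "high"
vertices have complementary neighbourhoods in `W`, and this yields a proper 2-colouring of `M`
outside `W` (and outside one vertex with no neighbour in `W`, if there is one). Both colour
classes are independent, so `|V| ≤ n + 1 + 2 α(M) ≤ 3n + 3`.
-/

open Finset Function

section

variable {V : Type*} {M : SimpleGraph V}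

lemma Fin.eq_zero_or_eq_one_or_eq_succ_succ {N : ℕ} (i : Fin (N + 2)) :
    i = 0 ∨ i = 1 ∨ ∃ t : Fin N, i = t.succ.succ := by
  obtain rfl | ⟨i, rfl⟩ := i.eq_zero_or_eq_succ
  · exact .inl rfl
  obtain rfl | ⟨t, rfl⟩ := i.eq_zero_or_eq_succ
  · exact .inr (.inl rfl)
  · exact .inr (.inr ⟨t, rfl⟩)

lemma contains_compl_fromRel {α : Type*} {r : α → α → Prop} (f : α → V) (hf : Injective f)
    (h : ∀ a b, M.Adj (f a) (f b) → r a b ∨ r b a) : Contains (fromRel r)ᶜ Mᶜ :=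
  ⟨f, hf, fun a b hab => by
    simp only [compl_adj, fromRel_adj] at hab ⊢
    exact ⟨hf.ne hab.1, fun hM => hab.2 ⟨hab.1, h a b hM⟩⟩⟩

lemma contains_knMinusDoubleStar {N m : ℕ} {x y : V} {g : Fin N → V} (hxy : x ≠ y)
    (hg : Injective g) (hx : ∀ i, g i ≠ x) (hy : ∀ i, g i ≠ y)
    (hind : ∀ i j, ¬M.Adj (g i) (g j)) (hxg : ∀ i, M.Adj x (g i) → (i : ℕ) < m)
    (hyg : ∀ i, M.Adj y (g i) → m ≤ i ∧ (i : ℕ) < 2 * m) :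
    Contains (KnMinusDoubleStar (N + 2) m) Mᶜ := by
  refine contains_compl_fromRel (Fin.cons x (Fin.cons y g)) ?_ ?_
  · refine Fin.cons_injective_iff.2 ⟨?_, Fin.cons_injective_iff.2 ⟨?_, hg⟩⟩
    · rintro ⟨i, hi⟩
      cases i using Fin.cases with
      | zero => exact hxy hi.symm
      | succ i => exact hx i hi
    · rintro ⟨i, rfl⟩
      exact hy i rfl
  · intro i j hij
    obtain rfl | rfl | ⟨i, rfl⟩ := i.eq_zero_or_eq_one_or_eq_succ_succ <;>
    obtain rfl | rfl | ⟨j, rfl⟩ := j.eq_zero_or_eq_one_or_eq_succ_succ <;>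
    simp only [Fin.cons_zero, Fin.cons_one, Fin.cons_succ] at hij <;>
    simp only [Fin.val_zero, Fin.val_one, Fin.val_succ, true_and, true_or, or_true]
    all_goals first
      | exact absurd hij M.irrefl
      | exact absurd hij (hind _ _)
      | (have := hxg _ hij; omega)
      | (have := hxg _ hij.symm; omega)
      | (have := hyg _ hij; omega)
      | (have := hyg _ hij.symm; omega)

lemma Finset.exists_injective_forall_mem {s : Finset V} {n : ℕ} (h : #s = n) :
    ∃ e : Fin n → V, Injective e ∧ ∀ i, e i ∈ s :=
  ⟨fun i => (s.equivFinOfCardEq h).symm i, Subtype.val_injective.comp (Equiv.injective _),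
    fun i => ((s.equivFinOfCardEq h).symm i).2⟩

lemma exists_disjoint_supersets_card_eq [DecidableEq V] {W A B : Finset V} {m : ℕ} (hA : A ⊆ W)
    (hB : B ⊆ W) (hAB : Disjoint A B) (hAm : #A ≤ m) (hBm : #B ≤ m) (hmW : 2 * m ≤ #W) :
    ∃ A' B', A ⊆ A' ∧ B ⊆ B' ∧ A' ∪ B' ⊆ W ∧ Disjoint A' B' ∧ #A' = m ∧ #B' = m := by
  obtain ⟨A', hAA', hA'W, hA'⟩ := exists_subsuperset_card_eq (subset_sdiff.2 ⟨hA, hAB⟩) hAm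
    (by rw [card_sdiff_of_subset hB]; omega)
  have hBA' : B ⊆ W \ A' := subset_sdiff.2 ⟨hB, disjoint_of_subset_right hA'W disjoint_sdiff⟩
  obtain ⟨B', hBB', hB'W, hB'⟩ := exists_subsuperset_card_eq hBA' hBm
    (by rw [card_sdiff_of_subset (hA'W.trans sdiff_subset)]; omega)
  exact ⟨A', B', hAA', hBB', union_subset (hA'W.trans sdiff_subset) (hB'W.trans sdiff_subset),
    disjoint_of_subset_right hB'W disjoint_sdiff, hA', hB'⟩

lemma exists_injective_blocks [DecidableEq V] {W A B : Finset V} {m k : ℕ}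
    (hW : #W = m + m + k) (hABW : A ∪ B ⊆ W) (hAB : Disjoint A B) (hA : #A = m) (hB : #B = m) :
    ∃ g : Fin (m + m + k) → V, Injective g ∧ (∀ i, g i ∈ W) ∧ (∀ i, g i ∈ A → (i : ℕ) < m) ∧
      ∀ i, g i ∈ B → m ≤ i ∧ (i : ℕ) < 2 * m := by
  have hC : #(W \ (A ∪ B)) = k := by
    rw [card_sdiff_of_subset hABW, card_union_of_disjoint hAB, hA, hB, hW]
    omega
  obtain ⟨a, ha, haA⟩ := Finset.exists_injective_forall_mem hA
  obtain ⟨b, hb, hbB⟩ := Finset.exists_injective_forall_mem hB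
  obtain ⟨c, hc, hcC⟩ := Finset.exists_injective_forall_mem hC
  have hab : ∀ i, Fin.append a b i ∈ A ∪ B :=
    Fin.addCases (fun i => by simp only [Fin.append_left, mem_union, haA, true_or])
      (fun i => by simp only [Fin.append_right, mem_union, hbB, or_true])
  refine ⟨Fin.append (Fin.append a b) c, Fin.append_injective_iff.2
    ⟨Fin.append_injective_iff.2 ⟨ha, hb, fun i j h => disjoint_left.1 hAB (haA i) (h ▸ hbB j)⟩,
      hc, fun i j h => (mem_sdiff.1 (hcC j)).2 (h ▸ hab i)⟩, ?_, ?_, ?_⟩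
  · intro i
    induction i using Fin.addCases with
    | left i => simpa only [Fin.append_left] using hABW (hab i)
    | right i => simpa only [Fin.append_right] using (mem_sdiff.1 (hcC i)).1
  · intro i h
    induction i using Fin.addCases with
    | left i =>
      induction i using Fin.addCases with
      | left i => simp only [Fin.val_castAdd]; omega
      | right i =>
        simp only [Fin.append_left, Fin.append_right] at h
        exact absurd (hbB i) (disjoint_left.1 hAB h)
    | right i =>
      simp only [Fin.append_right] at h
      exact absurd (mem_union_left _ h) (mem_sdiff.1 (hcC i)).2
  · intro i h
    induction i using Fin.addCases with
    | left i =>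
      induction i using Fin.addCases with
      | left i =>
        simp only [Fin.append_left] at h
        exact absurd h (disjoint_left.1 hAB (haA i))
      | right i => simp only [Fin.val_castAdd, Fin.val_natAdd]; omega
    | right i =>
      simp only [Fin.append_right] at h
      exact absurd (mem_union_right _ h) (mem_sdiff.1 (hcC i)).2

namespace SimpleGraph

def neighborsIn (M : SimpleGraph V) [DecidableRel M.Adj] (W : Finset V) (v : V) : Finset V :=
  {w ∈ W | M.Adj v w}

section neighborsIn

variable [DecidableRel M.Adj] {W : Finset V} {u v w : V}

@[simp]
lemma mem_neighborsIn : w ∈ M.neighborsIn W v ↔ w ∈ W ∧ M.Adj v w := mem_filter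

lemma neighborsIn_subset : M.neighborsIn W v ⊆ W := filter_subset _ _

lemma disjoint_neighborsIn_of_adj (htf : M.CliqueFree 3) (h : M.Adj u v) :
    Disjoint (M.neighborsIn W u) (M.neighborsIn W v) := by
  classical
  refine Finset.disjoint_left.2 fun w hu hv => htf {u, v, w} ?_
  exact is3Clique_triple_iff.2 ⟨h, (mem_neighborsIn.1 hu).2, (mem_neighborsIn.1 hv).2⟩

lemma neighborsIn_eq_sdiff_of_adj [DecidableEq V] (htf : M.CliqueFree 3) (h : M.Adj u v)
    (hcard : #W ≤ #(M.neighborsIn W u) + #(M.neighborsIn W v)) :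
    M.neighborsIn W v = W \ M.neighborsIn W u := by
  have hd := disjoint_neighborsIn_of_adj (W := W) htf h
  have hunion : M.neighborsIn W u ∪ M.neighborsIn W v = W :=
    eq_of_subset_of_card_le (union_subset neighborsIn_subset neighborsIn_subset)
      (by rwa [card_union_of_disjoint hd])
  simpa only [hunion] using (union_sdiff_cancel_left hd).symm

lemma adj_iff_not_adj_of_adj (htf : M.CliqueFree 3) (h : M.Adj u v)
    (hcard : #W ≤ #(M.neighborsIn W u) + #(M.neighborsIn W v)) (hw : w ∈ W) :
    M.Adj v w ↔ ¬M.Adj u w := by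
  classical
  simpa [hw] using congrArg (w ∈ ·) (neighborsIn_eq_sdiff_of_adj htf h hcard)

lemma not_disjoint_neighborsIn_of_card_lt {a : ℕ} {s t : V}
    (hbig : ∀ p ∉ W, ∀ q ∉ W, p ≠ q → Disjoint (M.neighborsIn W p) (M.neighborsIn W q) →
      a ≤ #(M.neighborsIn W p) ∨ a ≤ #(M.neighborsIn W q))
    (hne : ∀ p ∉ W, (M.neighborsIn W p).Nonempty) (hs : s ∉ W) (ht : t ∉ W)
    (hsa : #(M.neighborsIn W s) < a) (hta : #(M.neighborsIn W t) < a) :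
    ¬Disjoint (M.neighborsIn W s) (M.neighborsIn W t) := by
  intro hd
  obtain rfl | hst := eq_or_ne s t
  · exact (hne s hs).ne_empty (disjoint_self.1 hd)
  · have := hbig s hs t ht hst hd
    omega

end neighborsIn

structure IsDoubleStarFrame (M : SimpleGraph V) [DecidableRel M.Adj] (n m : ℕ) (W : Finset V)
    (x y : V) : Prop where
  isNIndepSet : M.IsNIndepSet n W
  ne : x ≠ y
  left_notMem : x ∉ W
  right_notMem : y ∉ W
  disjoint : Disjoint (M.neighborsIn W x) (M.neighborsIn W y)
  card_left_le : #(M.neighborsIn W x) ≤ m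
  card_right_le : #(M.neighborsIn W y) ≤ m

lemma card_le_card_add_two_mul_indepNum [Fintype V] (S : Finset V) (c : V → Prop)
    (hc : ∀ p ∉ S, ∀ q ∉ S, M.Adj p q → (c p ↔ ¬c q)) :
    Fintype.card V ≤ #S + 2 * M.indepNum := by
  classical
  have hclass (P : V → Prop) [DecidablePred P] (hP : ∀ p ∉ S, ∀ q ∉ S, P p → P q → ¬M.Adj p q) :
      #{p | p ∉ S ∧ P p} ≤ M.indepNum :=
    IsIndepSet.card_le_indepNum fun p hp q hq _ => by
      simp only [coe_filter, mem_univ, true_and, Set.mem_ofPred_eq] at hp hq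
      exact hP p hp.1 q hq.1 hp.2 hq.2
  have hcover : (univ : Finset V) ⊆
      S ∪ (({p | p ∉ S ∧ c p} : Finset V) ∪ ({p | p ∉ S ∧ ¬c p} : Finset V)) := fun p _ => by
    simp only [mem_union, mem_filter, mem_univ, true_and]
    tauto
  calc Fintype.card V ≤ #S + (#{p | p ∉ S ∧ c p} + #{p | p ∉ S ∧ ¬c p}) :=
        (card_le_card hcover).trans
          ((card_union_le _ _).trans (Nat.add_le_add_left (card_union_le _ _) _))
    _ ≤ #S + 2 * M.indepNum := by
        have h₁ := hclass c fun p hp q hq hcp hcq hpq => (hc p hp q hq hpq).1 hcp hcq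
        have h₂ := hclass (¬c ·) fun p hp q hq hcp hcq hpq => hcp ((hc p hp q hq hpq).2 hcq)
        omega

section Counting

variable [Fintype V] [DecidableEq V] [DecidableRel M.Adj] {W : Finset V} {a : ℕ} {w₀ : V}

lemma card_le_of_neighborsIn_eq_empty {p₀ : V} (htf : M.CliqueFree 3) (hWa : #W ≤ 2 * a)
    (hbig : ∀ p ∉ W, ∀ q ∉ W, p ≠ q → Disjoint (M.neighborsIn W p) (M.neighborsIn W q) →
      a ≤ #(M.neighborsIn W p) ∨ a ≤ #(M.neighborsIn W q))
    (hw₀ : w₀ ∈ W) (hp₀ : p₀ ∉ W) (hempty : M.neighborsIn W p₀ = ∅) :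
    Fintype.card V ≤ #W + 1 + 2 * M.indepNum := by
  have hhigh : ∀ p ∉ W, p ≠ p₀ → a ≤ #(M.neighborsIn W p) := fun p hp hne =>
    (hbig p₀ hp₀ p hp hne.symm (hempty ▸ disjoint_empty_left _)).elim
      (fun h => by rw [hempty, card_empty] at h; omega) id
  calc Fintype.card V ≤ #(insert p₀ W) + 2 * M.indepNum := by
        refine card_le_card_add_two_mul_indepNum _ (M.Adj · w₀) fun p hp q hq hpq => ?_
        rw [mem_insert, not_or] at hp hq
        have := hhigh p hp.2 hp.1
        have := hhigh q hq.2 hq.1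
        exact adj_iff_not_adj_of_adj htf hpq.symm (by omega) hw₀
    _ ≤ #W + 1 + 2 * M.indepNum := by have := card_insert_le p₀ W; omega

lemma card_le_of_neighborsIn_nonempty (htf : M.CliqueFree 3) (hWa : #W ≤ 2 * a)
    (hbig : ∀ p ∉ W, ∀ q ∉ W, p ≠ q → Disjoint (M.neighborsIn W p) (M.neighborsIn W q) →
      a ≤ #(M.neighborsIn W p) ∨ a ≤ #(M.neighborsIn W q))
    (hw₀ : w₀ ∈ W) (hne : ∀ p ∉ W, (M.neighborsIn W p).Nonempty) :
    Fintype.card V ≤ #W + 2 * M.indepNum := by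
  set N := M.neighborsIn W
  -- `T` and `W \ T` are never both bad, so a high vertex can be coloured by whether its
  -- neighbourhood is bad, falling back on adjacency to `w₀` when neither side is.
  let IsBad (T : Finset V) : Prop := ∃ s ∉ W, #(N s) < a ∧ Disjoint (N s) T
  have not_bad_compl : ∀ p, IsBad (N p) → ¬IsBad (W \ N p) := by
    rintro p ⟨s, hs, hsa, hsp⟩ ⟨t, ht, hta, htp⟩
    refine not_disjoint_neighborsIn_of_card_lt hbig hne hs ht hsa hta
      (sdiff_disjoint.mono (subset_sdiff.2 ⟨neighborsIn_subset, hsp⟩) fun w hw => ?_)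
    by_contra hwp
    exact Finset.disjoint_left.1 htp hw (mem_sdiff.2 ⟨neighborsIn_subset hw, hwp⟩)
  refine card_le_card_add_two_mul_indepNum W
    (fun p => a ≤ #(N p) ∧ (IsBad (N p) ∨ ¬IsBad (W \ N p) ∧ M.Adj p w₀)) ?_
  intro p hp q hq hpq
  have hd : Disjoint (N p) (N q) := disjoint_neighborsIn_of_adj htf hpq
  rcases lt_or_ge #(N p) a with hpa | hpa <;> rcases lt_or_ge #(N q) a with hqa | hqa
  · exact absurd hd (not_disjoint_neighborsIn_of_card_lt hbig hne hp hq hpa hqa)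
  · simp only [not_le.2 hpa, false_and, false_iff, not_not]
    exact ⟨hqa, .inl ⟨p, hp, hpa, hd⟩⟩
  · simp only [not_le.2 hqa, false_and, not_false_eq_true, iff_true]
    exact ⟨hpa, .inl ⟨q, hq, hqa, hd.symm⟩⟩
  · have hcard : #W ≤ #(N p) + #(N q) := by omega
    have hcard' := hcard.trans_eq (add_comm _ _)
    have hNq : N q = W \ N p := neighborsIn_eq_sdiff_of_adj htf hpq hcard
    have hNp : N p = W \ N q := neighborsIn_eq_sdiff_of_adj htf hpq.symm hcard'
    have hw : M.Adj p w₀ ↔ ¬M.Adj q w₀ := adj_iff_not_adj_of_adj htf hpq.symm hcard' hw₀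
    have hp' := not_bad_compl p
    have hq' := not_bad_compl q
    rw [← hNq] at hp' ⊢
    rw [← hNp] at hq' ⊢
    simp only [hpa, hqa, true_and]
    generalize IsBad (N p) = bp at hp' hq' ⊢
    generalize IsBad (N q) = bq at hp' hq' ⊢
    tauto

end Counting

variable [DecidableEq V] [DecidableRel M.Adj]

lemma IsIndepSet.exists_isDoubleStarFrame {I : Finset V} {n : ℕ} (hI : M.IsIndepSet I)
    (hn : n + 2 ≤ #I) (m : ℕ) : ∃ W x y, M.IsDoubleStarFrame n m W x y := by
  obtain ⟨x, hx, y, hy, hxy⟩ := one_lt_card.1 (by omega : 1 < #I)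
  obtain ⟨W, hWxy, hW⟩ := exists_subset_card_eq (s := I \ {x, y}) (n := n) (by
    rw [card_sdiff_of_subset (insert_subset hx (singleton_subset_iff.2 hy)), card_pair hxy]
    omega)
  have hWI : W ⊆ I := hWxy.trans sdiff_subset
  have hxW : x ∉ W := fun h => (mem_sdiff.1 (hWxy h)).2 (by simp)
  have hyW : y ∉ W := fun h => (mem_sdiff.1 (hWxy h)).2 (by simp)
  have hempty {v} (hv : v ∈ I) (hvW : v ∉ W) : M.neighborsIn W v = ∅ :=
    filter_eq_empty_iff.2 fun w hw => hI hv (hWI hw) (fun h => hvW (h ▸ hw))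
  refine ⟨W, x, y, ⟨hI.mono (coe_subset.2 hWI), hW⟩, hxy, hxW, hyW, ?_, ?_, ?_⟩ <;>
    simp [hempty hx hxW, hempty hy hyW]

lemma exists_isDoubleStarFrame_of_indepNum_le [Fintype V] {n m : ℕ}
    {W : Finset V} (htf : M.CliqueFree 3) (hW : M.IsNIndepSet n W) (hα : M.indepNum ≤ n + 1)
    (hcard : 3 * n + 4 ≤ Fintype.card V) (hm : n ≤ 2 * m + 2) :
    ∃ x y, M.IsDoubleStarFrame n m W x y := by
  by_contra! hno
  have hbig : ∀ p ∉ W, ∀ q ∉ W, p ≠ q → Disjoint (M.neighborsIn W p) (M.neighborsIn W q) →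
      m + 1 ≤ #(M.neighborsIn W p) ∨ m + 1 ≤ #(M.neighborsIn W q) := by
    intro p hp q hq hpq hd
    by_contra! h
    exact hno p q ⟨hW, hpq, hp, hq, hd, by omega, by omega⟩
  have hWn := hW.card_eq
  have hWa : #W ≤ 2 * (m + 1) := by omega
  obtain ⟨w₀, hw₀⟩ : W.Nonempty := by
    rw [nonempty_iff_ne_empty]
    rintro rfl
    obtain ⟨p, q, hpq⟩ := Fintype.exists_pair_of_one_lt_card (α := V)
      (by rw [card_empty] at hWn; omega)
    simpa [neighborsIn] using hbig p (notMem_empty p) q (notMem_empty q) hpq (by simp [neighborsIn])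
  by_cases hzero : ∃ p ∉ W, M.neighborsIn W p = ∅
  · obtain ⟨p, hp, hpe⟩ := hzero
    have := card_le_of_neighborsIn_eq_empty htf hWa hbig hw₀ hp hpe
    omega
  · have := card_le_of_neighborsIn_nonempty htf hWa hbig hw₀ fun p hp =>
      nonempty_iff_ne_empty.2 fun he => hzero ⟨p, hp, he⟩
    omega

lemma IsDoubleStarFrame.contains {n m : ℕ} {W : Finset V} {x y : V}
    (h : M.IsDoubleStarFrame n m W x y) (hmn : 2 * m ≤ n) :
    Contains (KnMinusDoubleStar (n + 2) m) Mᶜ := by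
  obtain ⟨A, B, hxA, hyB, hABW, hAB, hA, hB⟩ := exists_disjoint_supersets_card_eq
    neighborsIn_subset neighborsIn_subset h.disjoint h.card_left_le h.card_right_le
    (h.isNIndepSet.card_eq ▸ hmn)
  obtain ⟨k, rfl⟩ : ∃ k, n = m + m + k := ⟨n - 2 * m, by omega⟩
  obtain ⟨g, hg, hgW, hgA, hgB⟩ := exists_injective_blocks h.isNIndepSet.card_eq hABW hAB hA hB
  refine contains_knMinusDoubleStar h.ne hg (fun i hi => h.left_notMem (hi ▸ hgW i))
    (fun i hi => h.right_notMem (hi ▸ hgW i)) (fun i j hij => ?_)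
    (fun i hi => hgA i (hxA (mem_neighborsIn.2 ⟨hgW i, hi⟩)))
    (fun i hi => hgB i (hyB (mem_neighborsIn.2 ⟨hgW i, hi⟩)))
  exact h.isNIndepSet.isIndepSet (hgW i) (hgW j) hij.ne hij

end SimpleGraph

lemma Contains.exists_isNIndepSet {n : ℕ} (h : Contains (⊤ : SimpleGraph (Fin n)) Mᶜ) :
    ∃ W, M.IsNIndepSet n W := by
  obtain ⟨f, hf, hadj⟩ := h
  refine ⟨univ.map ⟨f, hf⟩, ?_, by simp⟩
  rw [coe_map, coe_univ, Set.image_univ]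
  rintro _ ⟨i, rfl⟩ _ ⟨j, rfl⟩ hij
  exact ((compl_adj _ _ _).1 (hadj (ne_of_apply_ne _ hij))).2

end

theorem stmt3 {V : Type*} [Fintype V] (n : ℕ) (M : SimpleGraph V)
    (htf : M.CliqueFree 3)
    (hK : Contains (⊤ : SimpleGraph (Fin n)) Mᶜ)
    (hcard : 3 * n + 4 ≤ Fintype.card V) :
    Contains (KnMinusDoubleStar (n + 2) ((n - 1) / 2)) Mᶜ := by
  classical
  obtain ⟨W, x, y, hframe⟩ : ∃ W x y, M.IsDoubleStarFrame n ((n - 1) / 2) W x y := by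
    rcases le_or_gt (n + 2) M.indepNum with hα | hα
    · obtain ⟨I, hI⟩ := M.exists_isNIndepSet_indepNum
      exact hI.isIndepSet.exists_isDoubleStarFrame (hI.card_eq ▸ hα) _
    · obtain ⟨W, hW⟩ := hK.exists_isNIndepSet
      exact ⟨W, exists_isDoubleStarFrame_of_indepNum_le htf hW (by omega) hcard (by omega)⟩
  exact hframe.contains (by omega)
end

section
/- For every integer s with 2 ≤ s ≤ 9, R(K_3, K_{10} - K_{1,s}) = 36, given that R(K_3, K_9) = 36. -/
open SimpleGraph

/-- Every graph on `r` vertices contains a triangle or contains `H` in its complement. -/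
def RamseyProp {β : Type*} (H : SimpleGraph β) (r : ℕ) : Prop :=
  ∀ F : SimpleGraph (Fin r), ¬ F.CliqueFree 3 ∨ Contains H Fᶜ

/-- `R` is the triangle Ramsey number `R(K_3, H)`. -/
def TriRamsey {β : Type*} (H : SimpleGraph β) (R : ℕ) : Prop :=
  IsLeast {r : ℕ | RamseyProp H r} R

/-!
If a triangle-free graph `F` on 36 vertices has a vertex of degree at least 10, its neighbourhood
is an independent 10-set. Otherwise pick an independent 9-set `T` and a vertex `u ∉ T` such that
every vertex of `T` has at most 8 neighbours besides `u`: the neighbourhood of a vertex `u` of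
degree 9 if there is one, and else any independent 9-set (from `R(K_3, K_9) = 36`). As
`9 * 8 < 26 * 3`, one of the 26 vertices outside `T ∪ {u}` has at most `2 ≤ s` neighbours
in `T`; taking it as the centre of the star and listing its neighbours in `T` first gives
`K_10 - K_{1,s}` in the complement of `F`. The lower bound holds because `K_9 ⊆ K_10 - K_{1,s}`.
-/

open SimpleGraph Finset Function

lemma contains_iff_isContained {α β : Type*} {H : SimpleGraph α} {G : SimpleGraph β} :
    Contains H G ↔ H ⊑ G :=
  ⟨fun ⟨f, hf, hadj⟩ => ⟨⟨⟨f, fun h => hadj h⟩, hf⟩⟩,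
    fun ⟨c⟩ => ⟨c, c.injective, fun _ _ h => c.toHom.map_adj h⟩⟩

lemma RamseyProp.mono {α β : Type*} {H' : SimpleGraph α} {H : SimpleGraph β} {r : ℕ}
    (hH : H' ⊑ H) (h : RamseyProp H r) : RamseyProp H' r := fun F =>
  (h F).imp_right fun hF => contains_iff_isContained.2 (hH.trans (contains_iff_isContained.1 hF))

section KnMinusStar

variable {n s : ℕ}

lemma knMinusStar_adj_zero_succ (i : Fin n) : (KnMinusStar (n + 1) s).Adj 0 i.succ ↔ s ≤ i := by
  simp [KnMinusStar, (Fin.succ_ne_zero i).symm]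

lemma knMinusStar_adj_succ_succ {i j : Fin n} :
    (KnMinusStar (n + 1) s).Adj i.succ j.succ ↔ i ≠ j := by
  simp [KnMinusStar]

lemma top_isContained_knMinusStar : (⊤ : SimpleGraph (Fin n)) ⊑ KnMinusStar (n + 1) s :=
  ⟨⟨⟨Fin.succ, fun h => knMinusStar_adj_succ_succ.2 h.ne⟩, Fin.succ_injective n⟩⟩

variable {V : Type*} {G : SimpleGraph V}

lemma knMinusStar_isContained_compl {v : V} {g : Fin n → V} (hg : Injective g)
    (hind : G.IsIndepSet (Set.range g)) (hv : v ∉ Set.range g)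
    (hs : ∀ i, G.Adj v (g i) → ↑i < s) :
    KnMinusStar (n + 1) s ⊑ Gᶜ := by
  have hzero (i : Fin n) : (KnMinusStar (n + 1) s).Adj 0 i.succ → Gᶜ.Adj v (g i) := fun h =>
    ⟨fun hvi => hv ⟨i, hvi.symm⟩,
      fun hadj => (hs i hadj).not_ge ((knMinusStar_adj_zero_succ i).1 h)⟩
  refine ⟨⟨⟨Fin.cons v g, fun {a b} hab => ?_⟩, Fin.cons_injective_iff.2 ⟨hv, hg⟩⟩⟩
  induction a using Fin.cases <;> induction b using Fin.cases
  · exact absurd rfl hab.ne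
  · exact hzero _ hab
  · exact (hzero _ hab.symm).symm
  · have hij := knMinusStar_adj_succ_succ.1 hab
    exact ⟨hg.ne hij, hind (Set.mem_range_self _) (Set.mem_range_self _) (hg.ne hij)⟩

lemma Finset.exists_injective_fin_filter_first (T : Finset V) (p : V → Prop)
    [DecidablePred p] :
    ∃ g : Fin #T → V, Injective g ∧ (∀ i, g i ∈ T) ∧
      ∀ i, p (g i) → ↑i < #(T.filter p) := by
  set A := T.filter p
  set B := T.filter (¬p ·)
  rw [← card_filter_add_card_filter_not p]
  let a : Fin #A → V := fun i => A.equivFin.symm i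
  let b : Fin #B → V := fun i => B.equivFin.symm i
  refine ⟨Fin.append a b, Fin.append_injective_iff.2 ⟨?_, ?_, ?_⟩, fun i => ?_, fun i => ?_⟩
  · exact Subtype.val_injective.comp A.equivFin.symm.injective
  · exact Subtype.val_injective.comp B.equivFin.symm.injective
  · intro i j hij
    have hpa : p (a i) := (mem_filter.1 (A.equivFin.symm i).2).2
    exact (mem_filter.1 (B.equivFin.symm j).2).2 (show p (b j) from hij ▸ hpa)
  · induction i using Fin.addCases
    · simpa [a] using (mem_filter.1 (A.equivFin.symm _).2).1
    · simpa [b] using (mem_filter.1 (B.equivFin.symm _).2).1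
  · induction i using Fin.addCases with
    | left i => exact fun _ => i.isLt
    | right j =>
      intro hpb
      exact absurd (by simpa [b] using hpb) (mem_filter.1 (B.equivFin.symm j).2).2

lemma knMinusStar_isContained_compl_of_isIndepSet [DecidableRel G.Adj]
    {T : Finset V} {v : V} (hT : G.IsIndepSet T) (hv : v ∉ T) (hs : #(T.filter (G.Adj v)) ≤ s) :
    KnMinusStar (#T + 1) s ⊑ Gᶜ := by
  obtain ⟨g, hg, hgT, hfirst⟩ := T.exists_injective_fin_filter_first (G.Adj v)
  have hrange : Set.range g ⊆ T := Set.range_subset_iff.2 hgT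
  exact knMinusStar_isContained_compl hg (hT.mono hrange) (fun h => hv (hrange h))
    fun i hi => (hfirst i hi).trans_le hs

end KnMinusStar

section TriangleFree

variable {V : Type*} {G : SimpleGraph V}

lemma exists_card_filter_adj_le [DecidableRel G.Adj] {T U : Finset V} {d k : ℕ}
    (hd : ∀ w ∈ T, #(U.filter (G.Adj w)) ≤ d) (hlt : #T * d < #U * (k + 1)) :
    ∃ v ∈ U, #(T.filter (G.Adj v)) ≤ k := by
  by_contra! h
  refine hlt.not_ge (card_mul_le_card_mul G.Adj h fun w hw => ?_)
  simpa only [bipartiteBelow, G.adj_comm _ w] using hd w hw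

variable [Fintype V] [DecidableRel G.Adj]

lemma top_isContained_compl_of_le_degree (hG : G.CliqueFree 3) {v : V} {n : ℕ}
    (hn : n ≤ G.degree v) : (⊤ : SimpleGraph (Fin n)) ⊑ Gᶜ := by
  rw [← card_neighborFinset_eq_degree] at hn
  obtain ⟨T, hTv, hT⟩ := exists_subset_card_eq hn
  have hTv' : (T : Set V) ⊆ G.neighborSet v := by simpa [← coe_neighborFinset] using hTv
  have hind : G.IsIndepSet T := (G.isIndepSet_neighborSet_of_triangleFree hG v).mono hTv'
  refine (not_cliqueFree_iff_top_isContained n).1 fun hfree => hfree T ?_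
  exact (isNClique_compl G).2 ⟨hind, hT⟩

lemma exists_isNIndepSet_of_degree_le [DecidableEq V] (hG : G.CliqueFree 3) {n : ℕ}
    (htop : (⊤ : SimpleGraph (Fin (n + 1))) ⊑ Gᶜ) (hdeg : ∀ w, G.degree w ≤ n + 1)
    (hcard : n + 1 < Fintype.card V) :
    ∃ T : Finset V, ∃ u ∉ T,
      G.IsNIndepSet (n + 1) T ∧ ∀ w ∈ T, #((G.neighborFinset w).erase u) ≤ n := by
  by_cases hmax : ∃ u, G.degree u = n + 1
  · obtain ⟨u, hu⟩ := hmax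
    refine ⟨G.neighborFinset u, u, by simp, ⟨?_, by simpa⟩, fun w hw => ?_⟩
    · simpa using G.isIndepSet_neighborSet_of_triangleFree hG u
    · rw [card_erase_of_mem (by simpa [G.adj_comm] using hw), card_neighborFinset_eq_degree]
      have := hdeg w
      omega
  · push Not at hmax
    obtain ⟨T, hT⟩ : ∃ T, Gᶜ.IsNClique (n + 1) T := by
      simpa [CliqueFree] using htop.not_cliqueFree
    rw [isNClique_compl] at hT
    obtain ⟨u, -, hu⟩ := exists_mem_notMem_of_card_lt_card (s := T) (t := univ)
      (by simpa [hT.card_eq] using hcard)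
    refine ⟨T, u, hu, hT, fun w _ => (card_erase_le).trans ?_⟩
    have := hdeg w; have := hmax w
    rw [card_neighborFinset_eq_degree]
    omega

end TriangleFree

theorem ramseyProp_knMinusStar_ten {s : ℕ} (hs : 2 ≤ s)
    (h9 : RamseyProp (⊤ : SimpleGraph (Fin 9)) 36) : RamseyProp (KnMinusStar 10 s) 36 := by
  classical
  intro F
  refine or_iff_not_imp_left.2 fun hF => contains_iff_isContained.2 ?_
  rw [not_not] at hF
  by_cases hdeg : ∃ u, 10 ≤ F.degree u
  · obtain ⟨u, hu⟩ := hdeg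
    exact (IsContained.of_le le_top).trans (top_isContained_compl_of_le_degree hF hu)
  push Not at hdeg
  have htop := contains_iff_isContained.1 ((h9 F).resolve_left (not_not.2 hF))
  obtain ⟨T, u, huT, hT, hTdeg⟩ :=
    exists_isNIndepSet_of_degree_le hF htop (fun w => Nat.le_of_lt_succ (hdeg w)) (by simp)
  set U := (insert u T)ᶜ
  have hU : #U = 26 := by rw [card_compl, card_insert_of_notMem huT, hT.card_eq]; rfl
  have hUdeg (w : Fin 36) (hw : w ∈ T) : #(U.filter (F.Adj w)) ≤ 8 := by
    refine (card_le_card fun x hx => ?_).trans (hTdeg w hw)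
    obtain ⟨hxU, hwx⟩ := mem_filter.1 hx
    exact mem_erase.2 ⟨fun h => by simp [U, h] at hxU, (F.mem_neighborFinset w x).2 hwx⟩
  obtain ⟨v, hvU, hv⟩ :=
    exists_card_filter_adj_le (k := 2) hUdeg (by rw [hT.card_eq, hU]; norm_num)
  have hvT : v ∉ T := fun h => by simp [U, h] at hvU
  have hcopy := knMinusStar_isContained_compl_of_isIndepSet hT.isIndepSet hvT (hv.trans hs)
  rwa [hT.card_eq] at hcopy

theorem stmt5 (h9 : TriRamsey (⊤ : SimpleGraph (Fin 9)) 36) :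
    ∀ s : ℕ, 2 ≤ s → s ≤ 9 → TriRamsey (KnMinusStar 10 s) 36 := by
  intro s hs _
  exact ⟨ramseyProp_knMinusStar_ten hs h9.1,
    fun r hr => h9.2 (hr.mono top_isContained_knMinusStar)⟩
end

section
/- For every integer s with 3 ≤ s ≤ 8, R(K_3, K_{10} - T_{s+}) = 31, given that R(K_3, K_9 - e) = 31 and R(K_3, K_9) = 36. -/
open SimpleGraph

/-- `K_n` minus one edge (the edge between `0` and `1`). -/
def KnMinusE (n : ℕ) : SimpleGraph (Fin n) :=
  (SimpleGraph.fromRel (fun a b : Fin n => a.val = 0 ∧ b.val = 1))ᶜ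

/-- `K_n` minus the edges of `T_{s+}` (the star `K_{1,s}` with center `0` and
leaves `1,…,s`, plus an extra vertex `s+1` adjacent to the leaf `1`). -/
def KnMinusT (n s : ℕ) : SimpleGraph (Fin n) :=
  (SimpleGraph.fromRel (fun a b : Fin n =>
    (a.val = 0 ∧ 1 ≤ b.val ∧ b.val ≤ s) ∨ (a.val = 1 ∧ b.val = s + 1)))ᶜ


lemma contains_trans {α β γ : Type*} {H : SimpleGraph α} {G : SimpleGraph β} {K : SimpleGraph γ}
    (h1 : Contains H G) (h2 : Contains G K) : Contains H K := by
  obtain ⟨f, hf, hfa⟩ := h1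
  obtain ⟨g, hg, hga⟩ := h2
  exact ⟨g ∘ f, hg.comp hf, fun a b h => hga (hfa h)⟩

lemma knMinusT_adj {n s : ℕ} {a b : Fin n} :
    (KnMinusT n s).Adj a b ↔ a ≠ b ∧
      ¬(((a : ℕ) = 0 ∧ 1 ≤ (b : ℕ) ∧ (b : ℕ) ≤ s) ∨ ((a : ℕ) = 1 ∧ (b : ℕ) = s + 1) ∨
        ((b : ℕ) = 0 ∧ 1 ≤ (a : ℕ) ∧ (a : ℕ) ≤ s) ∨ ((b : ℕ) = 1 ∧ (a : ℕ) = s + 1)) := by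
  simp only [KnMinusT, compl_adj, fromRel_adj]
  tauto

lemma knMinusE_adj {n : ℕ} {a b : Fin n} :
    (KnMinusE n).Adj a b ↔ a ≠ b ∧
      ¬(((a : ℕ) = 0 ∧ (b : ℕ) = 1) ∨ ((b : ℕ) = 0 ∧ (a : ℕ) = 1)) := by
  simp only [KnMinusE, compl_adj, fromRel_adj]
  tauto

lemma tf {V : Type*} {F : SimpleGraph V} (h : F.CliqueFree 3) {a b c : V}
    (hab : F.Adj a b) (hac : F.Adj a c) (hbc : F.Adj b c) : False := by
  classical
  exact h {a, b, c} (SimpleGraph.is3Clique_triple_iff.2 ⟨hab, hac, hbc⟩)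

/-- `K_9 - e` embeds into `K_10 - T_{s+}` (vertices 1..9, missing edge `{1,s+1}`). -/
lemma containsE_T {s : ℕ} (hs3 : 3 ≤ s) (hs8 : s ≤ 8) :
    Contains (KnMinusE 9) (KnMinusT 10 s) := by
  set g : Fin 9 → Fin 10 := fun k =>
    if (k : ℕ) = 0 then ⟨1, by omega⟩ else if (k : ℕ) = 1 then ⟨s + 1, by omega⟩
    else if (k : ℕ) ≤ s then ⟨(k : ℕ), by have := k.isLt; omega⟩
    else ⟨(k : ℕ) + 1, by have := k.isLt; omega⟩ with hg
  have spec : ∀ k : Fin 9,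
      ((k : ℕ) = 0 ∧ ((g k : ℕ)) = 1) ∨
      ((k : ℕ) = 1 ∧ ((g k : ℕ)) = s + 1) ∨
      (2 ≤ (k : ℕ) ∧ (k : ℕ) ≤ s ∧ ((g k : ℕ)) = (k : ℕ)) ∨
      (s + 1 ≤ (k : ℕ) ∧ 2 ≤ (k : ℕ) ∧ ((g k : ℕ)) = (k : ℕ) + 1) := by
    intro k
    simp only [hg]
    split_ifs with h1 h2 h3
    · exact Or.inl ⟨h1, rfl⟩
    · exact Or.inr (Or.inl ⟨h2, rfl⟩)
    · exact Or.inr (Or.inr (Or.inl ⟨by omega, h3, rfl⟩))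
    · exact Or.inr (Or.inr (Or.inr ⟨by omega, by omega, rfl⟩))
  have ginj : Function.Injective g := by
    intro a b h
    have h' := congrArg Fin.val h
    rcases spec a with ⟨p, q⟩ | ⟨p, q⟩ | ⟨p, p', q⟩ | ⟨p, p', q⟩ <;>
      rcases spec b with ⟨r, t⟩ | ⟨r, t⟩ | ⟨r, r', t⟩ | ⟨r, r', t⟩ <;>
      (apply Fin.ext; omega)
  refine ⟨g, ginj, ?_⟩
  intro a b hab
  rw [knMinusE_adj] at hab
  obtain ⟨hne, hnr⟩ := hab
  have hne' : (a : ℕ) ≠ (b : ℕ) := fun h => hne (Fin.ext h)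
  rw [knMinusT_adj]
  refine ⟨fun h => hne (ginj h), ?_⟩
  rcases spec a with ⟨p, q⟩ | ⟨p, q⟩ | ⟨p, p', q⟩ | ⟨p, p', q⟩ <;>
    rcases spec b with ⟨r, t⟩ | ⟨r, t⟩ | ⟨r, r', t⟩ | ⟨r, r', t⟩ <;> omega

/-- `K_10 - T_{s+}` embeds into `K_10 - T_{3+}` for `3 ≤ s ≤ 8`. -/
lemma containsT_T {s : ℕ} (hs3 : 3 ≤ s) (hs8 : s ≤ 8) :
    Contains (KnMinusT 10 s) (KnMinusT 10 3) := by
  set g : Fin 10 → Fin 10 := fun a =>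
    if (a : ℕ) = s + 1 then ⟨4, by omega⟩
    else if h : 4 ≤ (a : ℕ) ∧ (a : ℕ) ≤ s then ⟨(a : ℕ) + 1, by omega⟩
    else a with hg
  have spec : ∀ k : Fin 10,
      ((k : ℕ) = s + 1 ∧ ((g k : ℕ)) = 4) ∨
      (4 ≤ (k : ℕ) ∧ (k : ℕ) ≤ s ∧ ((g k : ℕ)) = (k : ℕ) + 1) ∨
      ((k : ℕ) ≠ s + 1 ∧ ¬(4 ≤ (k : ℕ) ∧ (k : ℕ) ≤ s) ∧ ((g k : ℕ)) = (k : ℕ)) := by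
    intro k
    simp only [hg]
    split_ifs with h1 h2
    · exact Or.inl ⟨h1, rfl⟩
    · exact Or.inr (Or.inl ⟨h2.1, h2.2, rfl⟩)
    · exact Or.inr (Or.inr ⟨h1, h2, rfl⟩)
  have ginj : Function.Injective g := by
    intro a b h
    have h' := congrArg Fin.val h
    rcases spec a with ⟨p, q⟩ | ⟨p, p', q⟩ | ⟨p, p', q⟩ <;>
      rcases spec b with ⟨r, t⟩ | ⟨r, r', t⟩ | ⟨r, r', t⟩ <;>
      (apply Fin.ext; omega)
  refine ⟨g, ginj, ?_⟩
  intro a b hab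
  rw [knMinusT_adj] at hab
  obtain ⟨hne, hnr⟩ := hab
  have hne' : (a : ℕ) ≠ (b : ℕ) := fun h => hne (Fin.ext h)
  rw [knMinusT_adj]
  refine ⟨fun h => hne (ginj h), ?_⟩
  rcases spec a with ⟨p, q⟩ | ⟨p, p', q⟩ | ⟨p, p', q⟩ <;>
    rcases spec b with ⟨r, t⟩ | ⟨r, r', t⟩ | ⟨r, r', t⟩ <;> omega

open Finset in
/-- An injection of `Fin n` into itself putting the elements of `A` first. -/
lemma exists_perm {n : ℕ} (A : Finset (Fin n)) :
    ∃ σ : Fin n → Fin n, Function.Injective σ ∧ ∀ j : Fin n, (σ j ∈ A ↔ (j : ℕ) < A.card) := by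
  classical
  have hle : A.card ≤ n := by simpa using Finset.card_le_card (Finset.subset_univ A)
  have hc : Aᶜ.card = n - A.card := by
    rw [Finset.card_compl]; simp
  refine ⟨fun j => if h : (j : ℕ) < A.card then (A.orderIsoOfFin rfl ⟨(j : ℕ), h⟩ : Fin n)
      else (Aᶜ.orderIsoOfFin hc ⟨(j : ℕ) - A.card, by have := j.isLt; omega⟩ : Fin n), ?_, ?_⟩
  · intro a b h
    dsimp only at h
    split_ifs at h with h1 h2 h2
    · have h3 := (A.orderIsoOfFin rfl).injective (Subtype.ext h)
      have h4 := congrArg Fin.val h3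
      simp only [Fin.val_mk] at h4
      exact Fin.ext h4
    · exfalso
      have hA : ((A.orderIsoOfFin rfl ⟨(a : ℕ), h1⟩ : {x // x ∈ A}) : Fin n) ∈ A :=
        (A.orderIsoOfFin rfl ⟨(a : ℕ), h1⟩).2
      rw [h] at hA
      exact Finset.mem_compl.1
        ((Aᶜ.orderIsoOfFin hc ⟨(b : ℕ) - A.card, by have := b.isLt; omega⟩).2) hA
    · exfalso
      have hA : ((A.orderIsoOfFin rfl ⟨(b : ℕ), h2⟩ : {x // x ∈ A}) : Fin n) ∈ A :=
        (A.orderIsoOfFin rfl ⟨(b : ℕ), h2⟩).2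
      rw [← h] at hA
      exact Finset.mem_compl.1
        ((Aᶜ.orderIsoOfFin hc ⟨(a : ℕ) - A.card, by have := a.isLt; omega⟩).2) hA
    · have h3 := (Aᶜ.orderIsoOfFin hc).injective (Subtype.ext h)
      have h4 := congrArg Fin.val h3
      simp only [Fin.val_mk] at h4
      have := a.isLt; have := b.isLt
      exact Fin.ext (by omega)
  · intro j
    dsimp only
    split_ifs with h1
    · simp only [h1, iff_true]
      exact (A.orderIsoOfFin rfl ⟨(j : ℕ), h1⟩).2
    · simp only [h1, iff_false]
      have hB := (Aᶜ.orderIsoOfFin hc ⟨(j : ℕ) - A.card, by have := j.isLt; omega⟩).2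
      exact Finset.mem_compl.1 hB

/-- Double counting: if all degrees are at most 9 then some vertex of `out` has
few neighbours among the `g i`. -/
lemma exists_low_deg {m : ℕ} {F : SimpleGraph (Fin 31)} [DecidableRel F.Adj]
    (hdeg : ∀ v : Fin 31, F.degree v ≤ 9)
    (out : Finset (Fin 31)) (g : Fin m → Fin 31) (k : ℕ)
    (hlt : 9 * m < k * out.card) :
    ∃ w ∈ out, (Finset.univ.filter (fun i => F.Adj w (g i))).card < k := by
  by_contra hcon
  push_neg at hcon
  have h1 : out.card • k ≤ ∑ w ∈ out, (Finset.univ.filter (fun i => F.Adj w (g i))).card :=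
    Finset.card_nsmul_le_sum _ _ _ hcon
  have h2 : ∑ w ∈ out, (Finset.univ.filter (fun i => F.Adj w (g i))).card
      = ∑ i : Fin m, (out.filter (fun w => F.Adj w (g i))).card := by
    simp only [Finset.card_filter]
    exact Finset.sum_comm
  have h3 : ∀ i : Fin m, (out.filter (fun w => F.Adj w (g i))).card ≤ 9 := by
    intro i
    have hsub : out.filter (fun w => F.Adj w (g i)) ⊆ F.neighborFinset (g i) := by
      intro w hw
      rw [SimpleGraph.mem_neighborFinset]
      exact ((Finset.mem_filter.1 hw).2).symm
    calc (out.filter (fun w => F.Adj w (g i))).card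
        ≤ (F.neighborFinset (g i)).card := Finset.card_le_card hsub
      _ = F.degree (g i) := F.card_neighborFinset_eq_degree (g i)
      _ ≤ 9 := hdeg _
  have h4 : ∑ i : Fin m, (out.filter (fun w => F.Adj w (g i))).card ≤ 9 * m := by
    calc ∑ i : Fin m, (out.filter (fun w => F.Adj w (g i))).card
        ≤ (Finset.univ : Finset (Fin m)).card • 9 :=
          Finset.sum_le_card_nsmul _ _ _ (fun i _ => h3 i)
      _ = 9 * m := by simp [Nat.mul_comm]
  have h5 : k * out.card ≤ 9 * m := by
    calc k * out.card = out.card • k := by rw [smul_eq_mul, Nat.mul_comm]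
      _ ≤ _ := h1
      _ = _ := h2
      _ ≤ 9 * m := h4
  omega

/-- If some vertex has degree at least 10 in a triangle-free graph, the complement
contains `K_10` and hence anything on 10 vertices. -/
lemma contains_of_bigdeg {F : SimpleGraph (Fin 31)} [DecidableRel F.Adj] (hcf : F.CliqueFree 3)
    {v : Fin 31} (hv : 10 ≤ F.degree v) : Contains (KnMinusT 10 3) Fᶜ := by
  rw [← F.card_neighborFinset_eq_degree] at hv
  obtain ⟨D, hD, hcard⟩ := Finset.exists_subset_card_eq hv
  let e := (Finset.equivFinOfCardEq hcard).symm
  refine ⟨fun i => ((e i : {x // x ∈ D}) : Fin 31), ?_, ?_⟩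
  · intro i j hij
    exact e.injective (Subtype.ext hij)
  · intro a b hab
    rw [SimpleGraph.compl_adj]
    refine ⟨fun h => (knMinusT_adj.1 hab).1 (e.injective (Subtype.ext h)), fun hadj => ?_⟩
    have h1 : F.Adj v (e a) := (F.mem_neighborFinset v _).1 (hD (e a).2)
    have h2 : F.Adj v (e b) := (F.mem_neighborFinset v _).1 (hD (e b).2)
    exact tf hcf h1 h2 hadj

/-- Core embedding: from a 9-point almost-independent configuration plus a suitable
extra vertex `w`, build a copy of `K_10 - T_{3+}` in the complement. -/
lemma embed_core {F : SimpleGraph (Fin 31)} {w : Fin 31} {g : Fin 9 → Fin 31}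
    (hg : Function.Injective g) (hw : ∀ i, w ≠ g i)
    (h1 : ∀ i : Fin 9, 3 ≤ (i : ℕ) → ¬F.Adj w (g i))
    (h2 : ∀ i j : Fin 9, i ≠ j → ¬((i : ℕ) = 0 ∧ (j : ℕ) = 3) →
      ¬((i : ℕ) = 3 ∧ (j : ℕ) = 0) → ¬F.Adj (g i) (g j)) :
    Contains (KnMinusT 10 3) Fᶜ := by
  classical
  set v : Fin 10 → Fin 31 := fun a =>
    if h : (a : ℕ) = 0 then w else g ⟨(a : ℕ) - 1, by have := a.isLt; omega⟩ with hv
  have hvinj : Function.Injective v := by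
    intro a b hab
    simp only [hv] at hab
    split_ifs at hab with ha hb hb
    · exact Fin.ext (ha.trans hb.symm)
    · exact absurd hab (hw _)
    · exact absurd hab.symm (hw _)
    · have h3 := congrArg Fin.val (hg hab)
      simp only [Fin.val_mk] at h3
      have := a.isLt; have := b.isLt
      exact Fin.ext (by omega)
  refine ⟨v, hvinj, ?_⟩
  intro a b hab
  rw [knMinusT_adj] at hab
  obtain ⟨hne, hnr⟩ := hab
  have hne' : (a : ℕ) ≠ (b : ℕ) := fun h => hne (Fin.ext h)
  rw [SimpleGraph.compl_adj]
  refine ⟨fun h => hne (hvinj h), ?_⟩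
  have hva : ∀ (c : Fin 10) (hc : (c : ℕ) ≠ 0),
      v c = g ⟨(c : ℕ) - 1, by have := c.isLt; omega⟩ := by
    intro c hc
    simp only [hv, dif_neg hc]
  by_cases ha : (a : ℕ) = 0
  · have hb0 : (b : ℕ) ≠ 0 := by omega
    have hvb := hva b hb0
    have hvaw : v a = w := by simp only [hv, dif_pos ha]
    rw [hvaw, hvb]
    exact h1 _ (by simp only [Fin.val_mk]; omega)
  · by_cases hb : (b : ℕ) = 0
    · have hvb : v b = w := by simp only [hv, dif_pos hb]
      have hvaa := hva a ha
      rw [hvaa, hvb]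
      exact fun h => h1 ⟨(a : ℕ) - 1, by have := a.isLt; omega⟩
        (by simp only [Fin.val_mk]; omega) h.symm
    · rw [hva a ha, hva b hb]
      apply h2
      · intro h
        have := congrArg Fin.val h
        simp only [Fin.val_mk] at this
        exact hne' (by omega)
      · simp only [Fin.val_mk]; omega
      · simp only [Fin.val_mk]; omega

def emb7 : Fin 7 → Fin 9 := fun t => ⟨(t : ℕ) + 2, by have := t.isLt; omega⟩

def pidx : Fin 9 → Fin 7 := fun j =>
  ⟨if (j : ℕ) < 3 then (j : ℕ) - 1 else (j : ℕ) - 2, by have := j.isLt; split <;> omega⟩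

lemma emb7_val (t : Fin 7) : ((emb7 t : Fin 9) : ℕ) = (t : ℕ) + 2 := rfl

lemma pidx_val (j : Fin 9) :
    ((pidx j : Fin 7) : ℕ) = if (j : ℕ) < 3 then (j : ℕ) - 1 else (j : ℕ) - 2 := rfl

lemma upper (h : RamseyProp (KnMinusE 9) 31) : RamseyProp (KnMinusT 10 3) 31 := by
  intro F
  classical
  by_cases hcf : F.CliqueFree 3
  case neg => exact Or.inl hcf
  right
  haveI : DecidableRel F.Adj := Classical.decRel _
  rcases h F with htri | ⟨f, hfinj, hfadj⟩
  · exact absurd hcf htri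
  by_cases hbig : ∃ v : Fin 31, 10 ≤ F.degree v
  · obtain ⟨v, hv⟩ := hbig
    exact contains_of_bigdeg hcf hv
  push_neg at hbig
  have hdeg : ∀ v, F.degree v ≤ 9 := fun v => by have := hbig v; omega
  have P : ∀ i j : Fin 9, i ≠ j → ¬((i : ℕ) = 0 ∧ (j : ℕ) = 1) →
      ¬((j : ℕ) = 0 ∧ (i : ℕ) = 1) → ¬F.Adj (f i) (f j) := by
    intro i j hij hc1 hc2 hadj
    have hE : (KnMinusE 9).Adj i j := knMinusE_adj.2 ⟨hij, by tauto⟩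
    exact ((SimpleGraph.compl_adj _ _ _).1 (hfadj hE)).2 hadj
  set out : Finset (Fin 31) := (Finset.univ.image f)ᶜ with hout_def
  have hout : out.card = 22 := by
    rw [hout_def, Finset.card_compl, Finset.card_image_of_injective _ hfinj]
    simp
  have hwnotin : ∀ w ∈ out, ∀ i, w ≠ f i := by
    intro w hw i he
    rw [hout_def, Finset.mem_compl] at hw
    exact hw (Finset.mem_image.2 ⟨i, Finset.mem_univ i, he.symm⟩)
  by_cases hxy : F.Adj (f 0) (f 1)
  · -- the pair (f 0, f 1) may be an edge
    obtain ⟨w, hwout, hwlt⟩ := exists_low_deg hdeg out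
      (fun t : Fin 7 => f (emb7 t)) 3 (by rw [hout]; norm_num)
    set A : Finset (Fin 7) :=
      Finset.univ.filter (fun t : Fin 7 => F.Adj w (f (emb7 t))) with hA
    have hAcard : A.card ≤ 2 := Nat.lt_succ_iff.mp hwlt
    obtain ⟨ρ, hρinj, hρmem⟩ := exists_perm A
    have hnowxy : ¬(F.Adj w (f 0) ∧ F.Adj w (f 1)) := fun hq => tf hcf hq.1 hq.2 hxy
    obtain ⟨u, u', huu, hu'⟩ : ∃ u u' : Fin 9,
        (((u : ℕ) = 0 ∧ (u' : ℕ) = 1) ∨ ((u : ℕ) = 1 ∧ (u' : ℕ) = 0)) ∧ ¬F.Adj w (f u') := by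
      by_cases hwx : F.Adj w (f 0)
      · exact ⟨0, 1, Or.inl ⟨rfl, rfl⟩, fun hq => hnowxy ⟨hwx, hq⟩⟩
      · exact ⟨1, 0, Or.inr ⟨rfl, rfl⟩, hwx⟩
    set σ : Fin 9 → Fin 9 := fun j =>
      if (j : ℕ) = 0 then u else if (j : ℕ) = 3 then u' else emb7 (ρ (pidx j)) with hσ
    have spec : ∀ j : Fin 9,
        ((j : ℕ) = 0 ∧ σ j = u) ∨ ((j : ℕ) = 3 ∧ σ j = u') ∨
        ((j : ℕ) ≠ 0 ∧ (j : ℕ) ≠ 3 ∧ σ j = emb7 (ρ (pidx j))) := by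
      intro j
      simp only [hσ]
      split_ifs with hq1 hq2
      · exact Or.inl ⟨hq1, rfl⟩
      · exact Or.inr (Or.inl ⟨hq2, rfl⟩)
      · exact Or.inr (Or.inr ⟨hq1, hq2, rfl⟩)
    have huval : (u : ℕ) ≤ 1 ∧ (u' : ℕ) ≤ 1 ∧ (u : ℕ) ≠ (u' : ℕ) := by omega
    have hσinj : Function.Injective σ := by
      intro a b hab
      rcases spec a with ⟨p, q⟩ | ⟨p, q⟩ | ⟨p, p', q⟩ <;>
        rcases spec b with ⟨r, t⟩ | ⟨r, t⟩ | ⟨r, r', t⟩ <;> apply Fin.ext <;>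
        rw [q, t] at hab <;> have hab' := congrArg Fin.val hab
      · omega
      · omega
      · rw [emb7_val] at hab'; omega
      · omega
      · omega
      · rw [emb7_val] at hab'; omega
      · rw [emb7_val] at hab'; omega
      · rw [emb7_val] at hab'; omega
      · rw [emb7_val, emb7_val] at hab'
        have h5 : ρ (pidx a) = ρ (pidx b) := Fin.ext (by omega)
        have h6 := congrArg Fin.val (hρinj h5)
        rw [pidx_val, pidx_val] at h6
        have := a.isLt; have := b.isLt
        split_ifs at h6 <;> omega
    have hval2 : ∀ t : Fin 9, (t : ℕ) ≠ 0 → (t : ℕ) ≠ 3 → 2 ≤ ((σ t : Fin 9) : ℕ) := by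
      intro t ht0 ht3
      rcases spec t with ⟨p, q⟩ | ⟨p, q⟩ | ⟨p, p', q⟩
      · omega
      · omega
      · rw [q, emb7_val]; omega
    apply embed_core (g := fun i => f (σ i)) (hfinj.comp hσinj)
      (fun i => hwnotin w hwout _)
    · -- h1
      intro i hi
      rcases spec i with ⟨p, q⟩ | ⟨p, q⟩ | ⟨p, p', q⟩
      · omega
      · rw [q]; exact hu'
      · rw [q]
        have hidx : 2 ≤ ((pidx i : Fin 7) : ℕ) := by
          rw [pidx_val]; have := i.isLt; split <;> omega
        have hmem : ρ (pidx i) ∉ A := by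
          intro hmem
          have := (hρmem (pidx i)).1 hmem
          omega
        intro hadj
        exact hmem (Finset.mem_filter.2 ⟨Finset.mem_univ _, hadj⟩)
    · -- h2
      intro i j hij hc1 hc2
      apply P (σ i) (σ j) (fun hq => hij (hσinj hq))
      · intro hq
        have hi : (i : ℕ) = 0 ∨ (i : ℕ) = 3 := by
          by_contra hcon
          push_neg at hcon
          have := hval2 i hcon.1 hcon.2
          omega
        have hj : (j : ℕ) = 0 ∨ (j : ℕ) = 3 := by
          by_contra hcon
          push_neg at hcon
          have := hval2 j hcon.1 hcon.2
          omega
        have hij' : (i : ℕ) ≠ (j : ℕ) := fun hq' => hij (Fin.ext hq')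
        omega
      · intro hq
        have hi : (i : ℕ) = 0 ∨ (i : ℕ) = 3 := by
          by_contra hcon
          push_neg at hcon
          have := hval2 i hcon.1 hcon.2
          omega
        have hj : (j : ℕ) = 0 ∨ (j : ℕ) = 3 := by
          by_contra hcon
          push_neg at hcon
          have := hval2 j hcon.1 hcon.2
          omega
        have hij' : (i : ℕ) ≠ (j : ℕ) := fun hq' => hij (Fin.ext hq')
        omega
  · -- no edge inside the nine points at all
    obtain ⟨w, hwout, hwlt⟩ := exists_low_deg hdeg out f 4 (by rw [hout]; norm_num)
    set A : Finset (Fin 9) := Finset.univ.filter (fun i => F.Adj w (f i)) with hA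
    have hAcard : A.card ≤ 3 := Nat.lt_succ_iff.mp hwlt
    obtain ⟨σ, hσinj, hσmem⟩ := exists_perm A
    have P' : ∀ i j : Fin 9, i ≠ j → ¬F.Adj (f i) (f j) := by
      intro i j hij hadj
      by_cases hc1 : (i : ℕ) = 0 ∧ (j : ℕ) = 1
      · have hi : i = 0 := by apply Fin.ext; simp [hc1.1]
        have hj : j = 1 := by apply Fin.ext; simp [hc1.2]
        rw [hi, hj] at hadj
        exact hxy hadj
      · by_cases hc2 : (j : ℕ) = 0 ∧ (i : ℕ) = 1
        · have hi : i = 1 := by apply Fin.ext; simp [hc2.2]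
          have hj : j = 0 := by apply Fin.ext; simp [hc2.1]
          rw [hi, hj] at hadj
          exact hxy hadj.symm
        · exact P i j hij hc1 hc2 hadj
    apply embed_core (g := fun i => f (σ i)) (hfinj.comp hσinj)
      (fun i => hwnotin w hwout _)
    · intro i hi
      have hmem : σ i ∉ A := by
        intro hmem
        have := (hσmem i).1 hmem
        omega
      intro hadj
      exact hmem (Finset.mem_filter.2 ⟨Finset.mem_univ _, hadj⟩)
    · intro i j hij _ _
      exact P' _ _ (fun hq => hij (hσinj hq))

theorem stmt6 (h9e : TriRamsey (KnMinusE 9) 31)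
    (h9 : TriRamsey (⊤ : SimpleGraph (Fin 9)) 36) :
    ∀ s : ℕ, 3 ≤ s → s ≤ 8 → TriRamsey (KnMinusT 10 s) 31 := by
  intro s hs3 hs8
  constructor
  · intro F
    rcases upper h9e.1 F with h | h
    · exact Or.inl h
    · exact Or.inr (contains_trans (containsT_T hs3 hs8) h)
  · intro r hr
    apply h9e.2
    intro F
    rcases hr F with h | h
    · exact Or.inl h
    · exact Or.inr (contains_trans (containsE_T hs3 hs8) h)
end

section
/- If G is a graph whose complement G^c contains a triangle {a, b, c} such that the graphs obtained by removing edge ab, edge bc, or edge ac from that triangle of G^c are all isomorphic to a single graph H^c, then R(K_3, G) = R(K_3, H). -/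
open SimpleGraph

-- forward: embedding of G into Fᶜ with the extra edge present ⇒ Contains H Fᶜ
lemma auxA {V W β : Type*} {G : SimpleGraph V} {H : SimpleGraph W} {F : SimpleGraph β}
    {u v : V} (φ : (Gᶜ.deleteEdges {s(u, v)}) ≃g Hᶜ)
    {f : V → β} (finj : Function.Injective f)
    (hf : ∀ ⦃x y⦄, G.Adj x y → F.Adj (f x) (f y))
    (huv : F.Adj (f u) (f v)) :
    Contains H F := by
  refine ⟨f ∘ φ.symm, finj.comp φ.symm.injective, ?_⟩
  intro x y hxy
  have hne : x ≠ y := hxy.ne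
  have hne' : φ.symm x ≠ φ.symm y := fun h => hne (φ.symm.injective h)
  have hdel : ¬ (Gᶜ.deleteEdges {s(u, v)}).Adj (φ.symm x) (φ.symm y) := by
    intro h
    have := φ.map_adj_iff.mpr h
    simp only [RelIso.apply_symm_apply] at this
    exact this.2 hxy
  rw [deleteEdges_adj] at hdel
  push_neg at hdel
  by_cases hG : Gᶜ.Adj (φ.symm x) (φ.symm y)
  · have he : s(φ.symm x, φ.symm y) = s(u, v) := by
      have := hdel hG; simpa using this
    rw [Sym2.eq_iff] at he
    rcases he with ⟨h1, h2⟩ | ⟨h1, h2⟩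
    · simp only [Function.comp_apply, h1, h2]; exact huv
    · simp only [Function.comp_apply, h1, h2]; exact huv.symm
  · rw [compl_adj, not_and, not_not] at hG
    exact hf (hG hne')

-- backward: embedding of H ⇒ embedding of G
lemma auxB {V W β : Type*} {G : SimpleGraph V} {H : SimpleGraph W} {F : SimpleGraph β}
    {u v : V} (φ : (Gᶜ.deleteEdges {s(u, v)}) ≃g Hᶜ)
    {g : W → β} (ginj : Function.Injective g)
    (hg : ∀ ⦃x y⦄, H.Adj x y → F.Adj (g x) (g y)) :
    Contains G F := by
  refine ⟨g ∘ φ, ginj.comp φ.injective, ?_⟩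
  intro x y hxy
  have hne : (φ : V → W) x ≠ φ y := fun h => hxy.ne (φ.injective h)
  have hnd : ¬ (Gᶜ.deleteEdges {s(u, v)}).Adj x y := by
    intro h
    exact (deleteEdges_adj.mp h).1.2 hxy
  have hnc : ¬ Hᶜ.Adj (φ x) (φ y) := fun h => hnd (φ.map_adj_iff.mp h)
  rw [compl_adj] at hnc
  push_neg at hnc
  exact hg (hnc hne)

lemma ramsey_iff {V W : Type*} (G : SimpleGraph V) (H : SimpleGraph W)
    (a b c : V) (hab : a ≠ b) (hbc : b ≠ c) (hac : a ≠ c)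
    (e₁ : Nonempty ((Gᶜ.deleteEdges {s(a, b)}) ≃g Hᶜ))
    (e₂ : Nonempty ((Gᶜ.deleteEdges {s(b, c)}) ≃g Hᶜ))
    (e₃ : Nonempty ((Gᶜ.deleteEdges {s(a, c)}) ≃g Hᶜ))
    (r : ℕ) : RamseyProp G r ↔ RamseyProp H r := by
  constructor
  · intro hG F
    rcases hG F with h | ⟨f, finj, hf⟩
    · exact Or.inl h
    by_cases hF : F.CliqueFree 3
    · right
      have hfab : f a ≠ f b := fun h => hab (finj h)
      have hfbc : f b ≠ f c := fun h => hbc (finj h)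
      have hfac : f a ≠ f c := fun h => hac (finj h)
      have : ¬ (F.Adj (f a) (f b) ∧ F.Adj (f a) (f c) ∧ F.Adj (f b) (f c)) := by
        intro ⟨p, q, s⟩
        exact hF _ (is3Clique_triple_iff.mpr ⟨p, q, s⟩)
      push_neg at this
      by_cases p : F.Adj (f a) (f b)
      · by_cases q : F.Adj (f a) (f c)
        · exact auxA e₂.some finj hf ⟨hfbc, this p q⟩
        · exact auxA e₃.some finj hf ⟨hfac, q⟩
      · exact auxA e₁.some finj hf ⟨hfab, p⟩
    · exact Or.inl hF
  · intro hH F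
    rcases hH F with h | ⟨g, ginj, hg⟩
    · exact Or.inl h
    · exact Or.inr (auxB e₁.some ginj hg)

theorem stmt12 {V W : Type*} (G : SimpleGraph V) (H : SimpleGraph W)
    (a b c : V) (hab : a ≠ b) (hbc : b ≠ c) (hac : a ≠ c)
    (h₁ : Gᶜ.Adj a b) (h₂ : Gᶜ.Adj b c) (h₃ : Gᶜ.Adj a c)
    (e₁ : Nonempty ((Gᶜ.deleteEdges {s(a, b)}) ≃g Hᶜ))
    (e₂ : Nonempty ((Gᶜ.deleteEdges {s(b, c)}) ≃g Hᶜ))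
    (e₃ : Nonempty ((Gᶜ.deleteEdges {s(a, c)}) ≃g Hᶜ)) :
    ∀ R : ℕ, TriRamsey G R ↔ TriRamsey H R := by
  intro R
  have hset : {r : ℕ | RamseyProp G r} = {r : ℕ | RamseyProp H r} := by
    ext r
    exact ramsey_iff G H a b c hab hbc hac e₁ e₂ e₃ r
  unfold TriRamsey
  rw [hset]
end

section
/- Let M be a maximal triangle-free graph on n > 2 vertices, S a dominating set of M with no edges inside S. Let M' be the graph obtained from M by adding a new vertex v adjacent exactly to all vertices of S. Then M' is triangle-free, and if additionally for every vertex s in S and every vertex u in V(M) \ S the distance in M between s and u is at most 2, then M' is maximal triangle-free. -/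
open SimpleGraph

/-- The graph obtained from `M` by adding one new vertex (`none`) adjacent
exactly to the vertices of `S`. -/
def extendBySet {V : Type*} (M : SimpleGraph V) (S : Set V) : SimpleGraph (Option V) :=
  SimpleGraph.fromRel (fun x y =>
    (∃ a b, x = some a ∧ y = some b ∧ M.Adj a b) ∨ (∃ a, x = some a ∧ y = none ∧ a ∈ S))

lemma extend_adj_ss {V : Type*} {M : SimpleGraph V} {S : Set V} {a b : V} :
    (extendBySet M S).Adj (some a) (some b) ↔ M.Adj a b := by
  have hs : ∀ p q : V, M.Adj p q → M.Adj q p := fun p q h => h.symm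
  have hn : ∀ p q : V, M.Adj p q → p ≠ q := fun p q h => h.ne
  simp only [extendBySet, fromRel_adj]
  aesop

lemma extend_adj_sn {V : Type*} {M : SimpleGraph V} {S : Set V} {a : V} :
    (extendBySet M S).Adj (some a) none ↔ a ∈ S := by
  simp only [extendBySet, fromRel_adj]
  aesop

lemma triangle_free_aux {V : Type*} {M : SimpleGraph V} (hM : M.CliqueFree 3) :
    ∀ x y z : V, M.Adj x y → M.Adj x z → M.Adj y z → False := by
  classical
  intro x y z h1 h2 h3
  exact hM {x, y, z} (is3Clique_triple_iff.mpr ⟨h1, h2, h3⟩)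

lemma exists_common {V : Type*} {M : SimpleGraph V}
    (hM : Maximal (fun H : SimpleGraph V => H.CliqueFree 3) M)
    {a b : V} (hne : a ≠ b) (hnadj : ¬ M.Adj a b) :
    ∃ c, M.Adj a c ∧ M.Adj b c := by
  classical
  set G := M ⊔ fromEdgeSet {s(a, b)} with hG
  by_cases hGf : G.CliqueFree 3
  · exact absurd ((hM.2 hGf le_sup_left) (by simp [hG, fromEdgeSet_adj, hne])) hnadj
  · rw [CliqueFree, not_forall] at hGf
    obtain ⟨t, ht⟩ := hGf
    rw [not_not, is3Clique_iff] at ht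
    obtain ⟨x, y, z, hxy, hxz, hyz, -⟩ := ht
    have hMtf := triangle_free_aux hM.1
    have key : ∀ p q : V, G.Adj p q → M.Adj p q ∨ ((p = a ∧ q = b) ∨ (p = b ∧ q = a)) := by
      intro p q h
      rcases h with h | h
      · exact Or.inl h
      · rw [fromEdgeSet_adj, Set.mem_singleton_iff, Sym2.eq_iff] at h
        exact Or.inr h.1
    have h1 := key _ _ hxy
    have h2 := key _ _ hxz
    have h3 := key _ _ hyz
    have hxyne := hxy.ne
    have hxzne := hxz.ne
    have hyzne := hyz.ne
    have hs : ∀ p q : V, M.Adj p q → M.Adj q p := fun p q h => h.symm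
    rcases h1 with h1 | h1 <;> rcases h2 with h2 | h2 <;> rcases h3 with h3 | h3
    · exact (hMtf x y z h1 h2 h3).elim
    · obtain ⟨ha, hb⟩ | ⟨ha, hb⟩ := h3
      · subst ha; subst hb; exact ⟨x, h1.symm, h2.symm⟩
      · subst ha; subst hb; exact ⟨x, h2.symm, h1.symm⟩
    · obtain ⟨ha, hb⟩ | ⟨ha, hb⟩ := h2
      · subst ha; subst hb; exact ⟨y, h1, h3.symm⟩
      · subst ha; subst hb; exact ⟨y, h3.symm, h1⟩
    · obtain ⟨h2a, h2b⟩ | ⟨h2a, h2b⟩ := h2 <;> obtain ⟨h3a, h3b⟩ | ⟨h3a, h3b⟩ := h3 <;>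
        simp_all
    · obtain ⟨ha, hb⟩ | ⟨ha, hb⟩ := h1
      · subst ha; subst hb; exact ⟨z, h2, h3⟩
      · subst ha; subst hb; exact ⟨z, h3, h2⟩
    · obtain ⟨h1a, h1b⟩ | ⟨h1a, h1b⟩ := h1 <;> obtain ⟨h3a, h3b⟩ | ⟨h3a, h3b⟩ := h3 <;>
        simp_all
    · obtain ⟨h1a, h1b⟩ | ⟨h1a, h1b⟩ := h1 <;> obtain ⟨h2a, h2b⟩ | ⟨h2a, h2b⟩ := h2 <;>
        simp_all
    · obtain ⟨h1a, h1b⟩ | ⟨h1a, h1b⟩ := h1 <;> obtain ⟨h2a, h2b⟩ | ⟨h2a, h2b⟩ := h2 <;>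
        simp_all

theorem stmt14 {V : Type*} [Fintype V] (M : SimpleGraph V) (S : Set V)
    (hcard : 2 < Fintype.card V)
    (hM : Maximal (fun H : SimpleGraph V => H.CliqueFree 3) M)
    (hdom : ∀ u : V, u ∈ S ∨ ∃ s ∈ S, M.Adj s u)
    (hind : ∀ a ∈ S, ∀ b ∈ S, ¬ M.Adj a b) :
    (extendBySet M S).CliqueFree 3 ∧
    ((∀ s ∈ S, ∀ u : V, u ∉ S → M.dist s u ≤ 2) →
      Maximal (fun H : SimpleGraph (Option V) => H.CliqueFree 3) (extendBySet M S)) := by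
  classical
  have hMtf := triangle_free_aux hM.1
  have hfree : (extendBySet M S).CliqueFree 3 := by
    intro t ht
    rw [is3Clique_iff] at ht
    obtain ⟨x, y, z, hxy, hxz, hyz, -⟩ := ht
    match x, y, z with
    | none, none, _ => exact hxy.ne rfl
    | none, some b, none => exact hxz.ne rfl
    | some a, none, none => exact hyz.ne rfl
    | some a, some b, some c =>
      exact hMtf a b c (extend_adj_ss.mp hxy) (extend_adj_ss.mp hxz) (extend_adj_ss.mp hyz)
    | none, some b, some c =>
      exact hind b (extend_adj_sn.mp hxy.symm) c (extend_adj_sn.mp hxz.symm)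
        (extend_adj_ss.mp hyz)
    | some a, none, some c =>
      exact hind a (extend_adj_sn.mp hxy) c (extend_adj_sn.mp hyz.symm)
        (extend_adj_ss.mp hxz)
    | some a, some b, none =>
      exact hind a (extend_adj_sn.mp hxz) b (extend_adj_sn.mp hyz)
        (extend_adj_ss.mp hxy)
  refine ⟨hfree, fun _ => ⟨hfree, ?_⟩⟩
  intro H hH hle x y hxy
  by_contra hnadj
  -- find common neighbor of x and y in extendBySet M S
  have hne : x ≠ y := hxy.ne
  have : ∃ z, (extendBySet M S).Adj x z ∧ (extendBySet M S).Adj y z := by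
    match x, y with
    | some a, some b =>
      have hab : a ≠ b := by simpa using hne
      have hnab : ¬ M.Adj a b := fun h => hnadj (extend_adj_ss.mpr h)
      obtain ⟨c, h1, h2⟩ := exists_common hM hab hnab
      exact ⟨some c, extend_adj_ss.mpr h1, extend_adj_ss.mpr h2⟩
    | some a, none =>
      have haS : a ∉ S := fun h => hnadj (extend_adj_sn.mpr h)
      obtain h | ⟨s, hs, hadj⟩ := hdom a
      · exact absurd h haS
      · exact ⟨some s, extend_adj_ss.mpr hadj.symm, (extend_adj_sn.mpr hs).symm⟩
    | none, some a =>
      have haS : a ∉ S := fun h => hnadj ((extend_adj_sn.mpr h)).symm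
      obtain h | ⟨s, hs, hadj⟩ := hdom a
      · exact absurd h haS
      · exact ⟨some s, (extend_adj_sn.mpr hs).symm, extend_adj_ss.mpr hadj.symm⟩
    | none, none => exact absurd rfl hne
  obtain ⟨z, h1, h2⟩ := this
  exact hH {x, y, z} (is3Clique_triple_iff.mpr ⟨hxy, hle h1, hle h2⟩)
end

section
/- Let M be a maximal triangle-free graph containing two vertices u, w with identical neighborhoods, let S be a dominating set of M with no internal edges, and suppose M' is obtained by adding a new vertex adjacent to all of S. Then either {u, w} ⊆ S or {u, w} ∩ S = ∅, and in either case u and w still have identical neighborhoods in M'. -/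
open SimpleGraph

theorem stmt16 {V : Type*} (M : SimpleGraph V) (S : Set V)
    (hM : Maximal (fun H : SimpleGraph V => H.CliqueFree 3) M)
    (u w : V) (huw : u ≠ w) (hN : M.neighborSet u = M.neighborSet w)
    (hdom : ∀ x : V, x ∈ S ∨ ∃ s ∈ S, M.Adj s x)
    (hind : ∀ a ∈ S, ∀ b ∈ S, ¬ M.Adj a b) :
    (u ∈ S ↔ w ∈ S) ∧
    (extendBySet M S).neighborSet (some u) = (extendBySet M S).neighborSet (some w) := by
  have hNadj : ∀ x, M.Adj u x ↔ M.Adj w x := by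
    intro x
    constructor <;> intro h
    · have : x ∈ M.neighborSet u := h
      rw [hN] at this; exact this
    · have : x ∈ M.neighborSet w := h
      rw [← hN] at this; exact this
  have key : ∀ a b : V, a ∈ S → (∀ x, M.Adj a x ↔ M.Adj b x) → b ∈ S := by
    intro a b ha hab
    rcases hdom b with h | ⟨s, hs, hsb⟩
    · exact h
    · exact absurd ((hab s).mpr hsb.symm) (hind a ha s hs)
  have hiff : u ∈ S ↔ w ∈ S :=
    ⟨fun h => key u w h hNadj, fun h => key w u h (fun x => (hNadj x).symm)⟩
  have hadj : ∀ a b : V, (extendBySet M S).Adj (some a) (some b) ↔ M.Adj a b := by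
    intro a b
    simp only [extendBySet, fromRel_adj]
    constructor
    · rintro ⟨hne, (⟨a',b',h1,h2,h3⟩|⟨a',h1,h2,_⟩)|(⟨a',b',h1,h2,h3⟩|⟨a',h1,h2,_⟩)⟩ <;>
        simp_all [M.adj_comm]
    · intro h
      exact ⟨by simp [h.ne], Or.inl (Or.inl ⟨a, b, rfl, rfl, h⟩)⟩
  have hnone : ∀ a : V, (extendBySet M S).Adj (some a) none ↔ a ∈ S := by
    intro a
    simp [extendBySet, fromRel_adj]
  refine ⟨hiff, ?_⟩
  ext x
  cases x with
  | none => simp [mem_neighborSet, hnone, hiff]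
  | some v => simp [mem_neighborSet, hadj, hNadj]
end
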